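/- Let f : {0,1}^n → {0,1} be a binary function and J ⊆ {1,…,n} a coalition. Then d(f, f_J) ≤ Σ_{i∉J} Inf_i(f). -/

import Mathlib

namespace JudgementAggregation

open Finset

open Classical in
noncomputable def prob {α : Type*} (s : Finset α) (P : α → Prop) : ℝ :=
  ((s.filter P).card : ℝ) / s.card

/-- Distance between boolean functions: probability of disagreement, uniform on `{0,1}^n`. -/
noncomputable def bdist {n : ℕ} (f g : (Fin n → Bool) → Bool) : ℝ :=
  prob (Finset.univ : Finset (Fin n → Bool)) (fun x => f x ≠ g x)

/-- The influence (Banzhaf index) of voter `i` on `f`. -/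
noncomputable def influence {n : ℕ} (i : Fin n) (f : (Fin n → Bool) → Bool) : ℝ :=
  prob (Finset.univ : Finset (Fin n → Bool)) (fun x => f x ≠ f (Function.update x i (!x i)))

open Classical in
/-- The junta function `f_J`: returns 1 iff, conditioned on agreeing with `x` on `J`,
`f` returns 1 with probability at least 1/2. -/
noncomputable def junta {n : ℕ} (f : (Fin n → Bool) → Bool) (J : Finset (Fin n)) :
    (Fin n → Bool) → Bool :=
  fun x =>
    if (1:ℝ)/2 ≤ prob (Finset.univ.filter (fun y : Fin n → Bool => ∀ i ∈ J, y i = x i))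
        (fun y => f y = true) then true else false

/-
If `f x ≠ f_J x`, then `f x` is a minority value of `f` on the points agreeing with `x` on `J`,
so `d(f, f_J)` is at most twice the probability that `f x ≠ f y`, where `x` is uniform and `y` is
`x` with its coordinates outside `J` resampled. Resampling one more coordinate `j` raises that
probability by at most `Inf_j(f) / 2`: with probability `1/2` the point `y` lands in the subcube
through `flipBit j x`, and then `f x ≠ f y` forces `f x ≠ f (flipBit j x)` or a disagreement
inside that subcube, which is distributed like the one through `x`.
-/

open Function
open scoped BigOperators

section Prob

variable {α : Type*}

theorem prob_nonneg (s : Finset α) (P : α → Prop) : 0 ≤ prob s P := by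
  unfold prob
  positivity

theorem prob_le_one (s : Finset α) (P : α → Prop) : prob s P ≤ 1 := by
  classical
  unfold prob
  exact div_le_one_of_le₀ (by exact_mod_cast card_filter_le s P) (Nat.cast_nonneg _)

theorem prob_not {s : Finset α} (hs : s.Nonempty) (P : α → Prop) :
    prob s (fun x => ¬ P x) = 1 - prob s P := by
  classical
  have hcard : ((s.filter P).card : ℝ) + (s.filter (fun x => ¬ P x)).card = s.card := by
    exact_mod_cast card_filter_add_card_filter_not P
  have hpos : (s.card : ℝ) ≠ 0 := by exact_mod_cast hs.card_pos.ne'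
  unfold prob
  rw [eq_sub_iff_add_eq, ← add_div, div_eq_one_iff_eq hpos, ← hcard, add_comm]
  congr

theorem prob_union_of_card_eq {s t : Finset α} [DecidableEq α] (hst : Disjoint s t)
    (hcard : s.card = t.card) (P : α → Prop) :
    prob (s ∪ t) P = (prob s P + prob t P) / 2 := by
  classical
  unfold prob
  rw [filter_union, card_union_of_disjoint hst, card_union_of_disjoint (disjoint_filter_filter hst),
    hcard]
  push_cast
  ring

theorem prob_univ_eq_expect [Fintype α] (P : α → Prop) [DecidablePred P] :
    prob univ P = 𝔼 x, if P x then (1 : ℝ) else 0 := by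
  rw [prob, expect_eq_sum_div_card, sum_boole]
  congr

theorem prob_ne_le_prob_ne_add {β : Type*} [DecidableEq β] (g : α → β) (x x' : α)
    (s : Finset α) :
    prob s (fun y => g x ≠ g y) ≤
      prob s (fun y => g x' ≠ g y) + if g x ≠ g x' then 1 else 0 := by
  split_ifs with h
  · linarith [prob_le_one s (fun y => g x ≠ g y), prob_nonneg s (fun y => g x' ≠ g y)]
  · rw [not_not.mp h, add_zero]

end Prob

section Subcube

variable {n : ℕ}

def flipBit (j : Fin n) (x : Fin n → Bool) : Fin n → Bool :=
  update x j (!x j)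

theorem flipBit_involutive (j : Fin n) : Involutive (flipBit j) := by
  intro x
  simp [flipBit]

def subcube (S : Finset (Fin n)) (x : Fin n → Bool) : Finset (Fin n → Bool) :=
  univ.filter fun y => ∀ i ∉ S, y i = x i

@[simp]
theorem mem_subcube {S : Finset (Fin n)} {x y : Fin n → Bool} :
    y ∈ subcube S x ↔ ∀ i ∉ S, y i = x i :=
  mem_filter_univ y

theorem subcube_empty (x : Fin n → Bool) : subcube ∅ x = {x} := by
  ext y
  simp [funext_iff]

theorem subcube_insert {j : Fin n} {S : Finset (Fin n)} (hj : j ∉ S) (x : Fin n → Bool) :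
    subcube (insert j S) x = subcube S x ∪ subcube S (flipBit j x) := by
  ext y
  simp only [mem_union, mem_subcube, mem_insert, not_or, flipBit]
  constructor
  · intro h
    by_cases hy : y j = x j
    · left
      intro i hi
      by_cases hij : i = j
      · exact hij ▸ hy
      · exact h i ⟨hij, hi⟩
    · right
      intro i hi
      by_cases hij : i = j
      · subst hij
        simpa using (Bool.eq_or_eq_not _ _).resolve_left hy
      · simpa [update_of_ne hij] using h i ⟨hij, hi⟩
  · rintro (h | h) i ⟨hij, hi⟩
    · exact h i hi
    · simpa [update_of_ne hij] using h i hi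

theorem disjoint_subcube_flipBit {j : Fin n} {S : Finset (Fin n)} (hj : j ∉ S)
    (x : Fin n → Bool) : Disjoint (subcube S x) (subcube S (flipBit j x)) := by
  rw [disjoint_left]
  intro y hx hx'
  simp only [mem_subcube, flipBit] at hx hx'
  simpa [hx j hj] using hx' j hj

theorem card_subcube (S : Finset (Fin n)) (x : Fin n → Bool) :
    (subcube S x).card = 2 ^ S.card := by
  induction S using Finset.induction_on generalizing x with
  | empty => simp [subcube_empty]
  | insert j S hj ih =>
    rw [subcube_insert hj, card_union_of_disjoint (disjoint_subcube_flipBit hj x), ih, ih,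
      card_insert_of_notMem hj, pow_succ]
    ring

end Subcube

section Resampling

variable {n : ℕ}

noncomputable def resampleDisagreement (f : (Fin n → Bool) → Bool) (S : Finset (Fin n)) : ℝ :=
  𝔼 x, prob (subcube S x) fun y => f x ≠ f y

theorem influence_eq_expect (i : Fin n) (f : (Fin n → Bool) → Bool) :
    influence i f = 𝔼 x, if f x ≠ f (flipBit i x) then (1 : ℝ) else 0 :=
  prob_univ_eq_expect _

theorem resampleDisagreement_insert (f : (Fin n → Bool) → Bool) {j : Fin n}
    {S : Finset (Fin n)} (hj : j ∉ S) :
    resampleDisagreement f (insert j S) ≤ resampleDisagreement f S + influence j f / 2 := by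
  have hsplit : ∀ x, prob (subcube (insert j S) x) (fun y => f x ≠ f y) ≤
      (prob (subcube S x) (fun y => f x ≠ f y)
        + prob (subcube S (flipBit j x)) (fun y => f (flipBit j x) ≠ f y)
        + if f x ≠ f (flipBit j x) then 1 else 0) / 2 := by
    intro x
    rw [subcube_insert hj, prob_union_of_card_eq (disjoint_subcube_flipBit hj x)
      (by rw [card_subcube, card_subcube])]
    linarith [prob_ne_le_prob_ne_add f x (flipBit j x) (subcube S (flipBit j x))]
  have hflip : 𝔼 x, prob (subcube S (flipBit j x)) (fun y => f (flipBit j x) ≠ f y) =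
      resampleDisagreement f S :=
    Fintype.expect_bijective _ (flipBit_involutive j).bijective _ _ fun _ => rfl
  calc resampleDisagreement f (insert j S) ≤ _ := expect_le_expect fun x _ => hsplit x
    _ = resampleDisagreement f S + influence j f / 2 := by
      rw [← expect_div, expect_add_distrib, expect_add_distrib, hflip, influence_eq_expect]
      unfold resampleDisagreement
      ring

theorem resampleDisagreement_le (f : (Fin n → Bool) → Bool) (S : Finset (Fin n)) :
    resampleDisagreement f S ≤ (∑ i ∈ S, influence i f) / 2 := by
  induction S using Finset.induction_on with
  | empty => simp [resampleDisagreement, subcube_empty, prob, filter_singleton]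
  | insert j S hj ih =>
    rw [sum_insert hj]
    linarith [resampleDisagreement_insert f hj]

theorem bdist_le_two_mul_resampleDisagreement {f g : (Fin n → Bool) → Bool} (S : Finset (Fin n))
    (hg : ∀ x, f x ≠ g x → 1 / 2 ≤ prob (subcube S x) fun y => f x ≠ f y) :
    bdist f g ≤ 2 * resampleDisagreement f S := by
  rw [bdist, prob_univ_eq_expect, resampleDisagreement, mul_expect]
  refine expect_le_expect fun x _ => ?_
  split_ifs with h
  · linarith [hg x h]
  · linarith [prob_nonneg (subcube S x) fun y => f x ≠ f y]

end Resampling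

theorem half_le_prob_ne_of_ne_junta {n : ℕ} {f : (Fin n → Bool) → Bool} {J : Finset (Fin n)}
    {x : Fin n → Bool} (h : f x ≠ junta f J x) :
    1 / 2 ≤ prob (subcube Jᶜ x) fun y => f x ≠ f y := by
  set C := univ.filter fun y : Fin n → Bool => ∀ i ∈ J, y i = x i
  have hcube : subcube Jᶜ x = C := by
    ext y
    simp [C]
  have hxC : x ∈ C := by simp [C]
  have hjunta : junta f J x = decide (1 / 2 ≤ prob C fun y => f y = true) := by
    simp [junta, C]
  rw [hcube]
  cases hfx : f x <;> rw [hfx, hjunta] at h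
  · have hmaj : 1 / 2 ≤ prob C fun y => f y = true := by simpa using h
    have hP : (fun y => false ≠ f y) = fun y => f y = true := by
      ext y
      cases f y <;> simp
    rwa [hP]
  · have hmin : prob C (fun y => f y = true) < 1 / 2 := by simpa using h
    have hP : (fun y => true ≠ f y) = fun y => ¬ f y = true := by
      ext y
      exact ne_comm
    rw [hP, prob_not ⟨x, hxC⟩]
    linarith

/-- the junta function is close to the original function whenever the voters
outside the junta have small total influence. -/
theorem junta_close (n : ℕ) (f : (Fin n → Bool) → Bool) (J : Finset (Fin n)) :
    bdist f (junta f J) ≤ ∑ i ∈ Jᶜ, influence i f := by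
  calc bdist f (junta f J) ≤ 2 * resampleDisagreement f Jᶜ :=
        bdist_le_two_mul_resampleDisagreement Jᶜ fun _ => half_le_prob_ne_of_ne_junta
    _ ≤ ∑ i ∈ Jᶜ, influence i f := by linarith [resampleDisagreement_le f Jᶜ]

end JudgementAggregation
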